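/- Let Π be a set of orderings on a finite vertex set V and let T' be a tree with vertex set V such that every σ ∈ Π satisfies Property D with respect to T' (i.e., T' is a DFS-tree support of Π). Let V* ⊆ V be such that the subgraph of T' induced by V* is a tree and V* contains the first vertex of every ordering in Π. For each connected component C of T' − V*, let v_C denote the unique vertex of V* that is adjacent in T' to a vertex of C. Let T be the graph on V consisting of the induced subtree T'[V*] together with, for each component C of T' − V* and each vertex x of C, the edge {v_C, x}. Then T is a tree in which every vertex of V ∖ V* is a leaf, and every σ ∈ Π satisfies Property D with respect to T (i.e., T is a DFS-tree support of Π). -/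

import Mathlib

/-- Property D for an ordering (given as a strict-order relation `lt` on the
vertices) with respect to a graph `H`: the four-point characterization of
DFS-orderings. -/
def PropertyD {V : Type*} (H : SimpleGraph V) (lt : V → V → Prop) : Prop :=
  ∀ a b c : V, lt a b → lt b c → H.Adj a c → ¬ H.Adj a b →
    ∃ d : V, lt a d ∧ lt d b ∧ H.Adj d b

/-!
A DFS-ordering of `T'` starts in `V*` and, by the four-point condition, visits each component
`C` of `T' − V*` in one contiguous block whose first vertex is the neighbour of `v_C`; in
particular `v_C` precedes all of `C`. Now take `a < b < c` with `{a, c}` an edge of `T` and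
`{a, b}` not. Replacing `c` by the first vertex of its component if necessary, `{a, c}` is an
edge of `T'` with `a ∈ V*`. If `b ∈ V*`, Property D for `T'` gives the witness; otherwise the
witness is `v_C` for the component `C` of `b`, and `a < v_C` because otherwise the four-point
condition applied to `a`, the first vertex of `C`, and `c` would produce a vertex of `C`
preceding the first one.
-/

open SimpleGraph

section

variable {V : Type*}

namespace SimpleGraph

variable {G H : SimpleGraph V} {s : Set V}

theorem Reachable.exists_walk_of_induce {x y : s} (h : (G.induce s).Reachable x y) :
    ∃ p : G.Walk x y, ∀ z ∈ p.support, ∃ hz : z ∈ s, (G.induce s).Reachable x ⟨z, hz⟩ := by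
  classical
  obtain ⟨q⟩ := h
  refine ⟨q.map (Embedding.induce s).toHom, fun z hz => ?_⟩
  replace hz : z ∈ (q.map (Embedding.induce s).toHom).support := hz
  rw [Walk.support_map, List.mem_map] at hz
  obtain ⟨z, hzq, rfl⟩ := hz
  exact ⟨z.2, ⟨q.takeUntil z hzq⟩⟩

/-- In a forest, two edges from a connected part of `s` to a connected part of `sᶜ`
share their endpoint in `s`. -/
theorem IsAcyclic.eq_of_adj_of_adj (hG : G.IsAcyclic) {a a' b b' : V}
    (p : G.Walk a a') (hp : ∀ z ∈ p.support, z ∈ s)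
    (q : G.Walk b b') (hq : ∀ z ∈ q.support, z ∉ s)
    (hab : G.Adj a b) (hab' : G.Adj a' b') : a = a' := by
  classical
  have hP : (Walk.cons hab q.bypass).IsPath :=
    q.bypass_isPath.cons fun h =>
      hq a (q.support_bypass_subset_support h) (hp a p.start_mem_support)
  have hb' : b' ∉ p.bypass.support := fun h =>
    hq b' q.end_mem_support (hp b' (p.support_bypass_subset_support h))
  have ha' := hG.mem_support_of_ne_mem_support_of_adj_of_isPath hP p.bypass_isPath hab'.symm hb'
  rw [Walk.support_cons, List.mem_cons] at ha'
  rcases ha' with h | h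
  · exact h.symm
  · exact absurd (hp a' p.end_mem_support) (hq a' (q.support_bypass_subset_support h))

theorem connected_of_induce_connected (hs : (G.induce s).Connected)
    (hGH : ∀ a ∈ s, ∀ b ∈ s, G.Adj a b → H.Adj a b) (hleaf : ∀ x ∉ s, ∃ y ∈ s, H.Adj x y) :
    H.Connected := by
  obtain ⟨r, hr⟩ := hs.nonempty.some
  have hreach : ∀ v ∈ s, H.Reachable r v := fun v hv =>
    (hs.preconnected ⟨r, hr⟩ ⟨v, hv⟩).map
      (⟨Subtype.val, fun {a b} h => hGH a a.2 b b.2 h⟩ : G.induce s →g H)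
  refine (connected_iff_exists_forall_reachable H).2 ⟨r, fun v => ?_⟩
  by_cases hv : v ∈ s
  · exact hreach v hv
  · obtain ⟨y, hy, hvy⟩ := hleaf v hv
    exact (hreach y hy).trans hvy.symm.reachable

/-- A cycle cannot pass through a vertex with at most one neighbour, so a cycle of `H` lies
in `s`, where it is a cycle of `G`. -/
theorem isAcyclic_of_subsingleton_neighborSet (hG : G.IsAcyclic)
    (hHG : ∀ a ∈ s, ∀ b ∈ s, H.Adj a b → G.Adj a b)
    (hleaf : ∀ x ∉ s, (H.neighborSet x).Subsingleton) : H.IsAcyclic := by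
  classical
  intro v c hc
  have hsupp : ∀ x ∈ c.support, x ∈ s := by
    intro x hx
    by_contra hxs
    have hc' := hc.rotate hx
    exact hc'.snd_ne_penultimate
      (hleaf x hxs (Walk.adj_snd hc'.not_nil) (Walk.adj_penultimate hc'.not_nil).symm)
  have hedges : ∀ e ∈ c.edges, e ∈ G.edgeSet := by
    intro e
    refine Sym2.ind (fun a b he => ?_) e
    exact hHG a (hsupp a (c.fst_mem_support_of_mem_edges he))
      b (hsupp b (c.snd_mem_support_of_mem_edges he)) (c.adj_of_mem_edges he)
  exact hG (c.transfer G hedges) (hc.transfer hedges)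

end SimpleGraph

theorem PropertyD.exists_lt_adj {H : SimpleGraph V} {lt : V → V → Prop}
    [Std.Trichotomous lt] [Std.Irrefl lt] (hPD : PropertyD H lt) (hH : H.Preconnected)
    {a b : V} (hab : lt a b) : ∃ d, lt d b ∧ H.Adj d b := by
  obtain ⟨p⟩ := hH a b
  obtain ⟨⟨⟨u, w⟩, huw⟩, -, hu, hw⟩ := p.exists_boundary_dart {z | lt z b} hab (irrefl_of lt b)
  rcases trichotomous_of lt w b with h | rfl | h
  · exact absurd h hw
  · exact ⟨u, hu, huw⟩
  · by_cases hub : H.Adj u b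
    · exact ⟨u, hu, hub⟩
    · obtain ⟨d, -, hdb, hd⟩ := hPD u b w hu h huw hub
      exact ⟨d, hdb, hd⟩

theorem exists_forall_ne_lt [Finite V] [Nonempty V] (lt : V → V → Prop)
    [Std.Trichotomous lt] [IsTrans V lt] [Std.Irrefl lt] : ∃ r, ∀ x, x ≠ r → lt r x := by
  obtain ⟨r, -, hr⟩ := (Finite.wellFounded_of_trans_of_irrefl lt).has_min Set.univ
    ⟨Classical.arbitrary V, trivial⟩
  refine ⟨r, fun x hx => ?_⟩
  rcases trichotomous_of lt r x with h | rfl | h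
  · exact h
  · exact absurd rfl hx
  · exact absurd h (hr x trivial)

section Components

variable {T' : SimpleGraph V} {Vs : Set V} {x y z w : V}

def ReachableOutside (T' : SimpleGraph V) (Vs : Set V) (x y : V) : Prop :=
  ∃ (hx : x ∉ Vs) (hy : y ∉ Vs), (T'.induce Vsᶜ).Reachable ⟨x, hx⟩ ⟨y, hy⟩

namespace ReachableOutside

theorem notMem_right (h : ReachableOutside T' Vs x y) : y ∉ Vs := h.2.1

theorem refl (hx : x ∉ Vs) : ReachableOutside T' Vs x x := ⟨hx, hx, .refl _⟩

theorem symm (h : ReachableOutside T' Vs x y) : ReachableOutside T' Vs y x :=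
  ⟨h.2.1, h.1, h.2.2.symm⟩

theorem trans (h : ReachableOutside T' Vs x y) (h' : ReachableOutside T' Vs y z) :
    ReachableOutside T' Vs x z :=
  ⟨h.1, h'.2.1, h.2.2.trans h'.2.2⟩

theorem of_adj (hx : x ∉ Vs) (hy : y ∉ Vs) (h : T'.Adj x y) : ReachableOutside T' Vs x y :=
  ⟨hx, hy, (induce_adj.2 h : (T'.induce Vsᶜ).Adj ⟨x, hx⟩ ⟨y, hy⟩).reachable⟩

theorem exists_walk (h : ReachableOutside T' Vs x y) :
    ∃ p : T'.Walk x y, ∀ z ∈ p.support, ReachableOutside T' Vs x z := by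
  obtain ⟨hx, hy, hxy⟩ := h
  obtain ⟨p, hp⟩ := hxy.exists_walk_of_induce
  exact ⟨p, fun z hz => let ⟨hz', h⟩ := hp z hz; ⟨hx, hz', h⟩⟩

end ReachableOutside

/-- `g` sends every vertex `x ∉ Vs` to the vertex `v_C` of `Vs` to which the component `C` of
`x` in `T' − Vs` is attached. -/
structure IsAttachment (T' : SimpleGraph V) (Vs : Set V) (g : V → V) : Prop where
  mem : ∀ x ∉ Vs, g x ∈ Vs
  eq_of_reachableOutside : ∀ {x y}, ReachableOutside T' Vs x y → g x = g y
  eq_of_adj : ∀ {x w}, x ∉ Vs → w ∈ Vs → T'.Adj x w → w = g x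

variable {g : V → V}

theorem IsAttachment.of_exists_adj (hT' : T'.IsAcyclic) (hVs : (T'.induce Vs).Connected)
    (hmem : ∀ x ∉ Vs, g x ∈ Vs)
    (hadj : ∀ x ∉ Vs, ∃ y, ReachableOutside T' Vs x y ∧ T'.Adj (g x) y)
    (hconst : ∀ {x y}, ReachableOutside T' Vs x y → g x = g y) : IsAttachment T' Vs g := by
  refine ⟨hmem, hconst, fun {x w} hx hw hxw => ?_⟩
  obtain ⟨y, hxy, hgy⟩ := hadj x hx
  obtain ⟨p, hp⟩ := (hVs.preconnected ⟨g x, hmem x hx⟩ ⟨w, hw⟩).exists_walk_of_induce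
  obtain ⟨q, hq⟩ := hxy.symm.exists_walk
  exact (hT'.eq_of_adj_of_adj p (fun z hz => (hp z hz).1) q
    (fun z hz => (hq z hz).notMem_right) hgy hxw.symm).symm

theorem IsAttachment.eq_or_reachableOutside_of_adj (hg : IsAttachment T' Vs g)
    (hxz : ReachableOutside T' Vs x z) (h : T'.Adj z w) :
    w = g x ∨ ReachableOutside T' Vs x w := by
  by_cases hw : w ∈ Vs
  · rw [hg.eq_of_reachableOutside hxz]
    exact Or.inl (hg.eq_of_adj hxz.notMem_right hw h)
  · exact Or.inr (hxz.trans (.of_adj hxz.notMem_right hw h))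

end Components

section Order

variable {T' T : SimpleGraph V} {Vs : Set V} {g : V → V} {lt : V → V → Prop} {x y : V}

def IsFirstInComponent (T' : SimpleGraph V) (Vs : Set V) (lt : V → V → Prop) (x y : V) : Prop :=
  ReachableOutside T' Vs x y ∧ ∀ z, ReachableOutside T' Vs x z → ¬ lt z y

theorem exists_isFirstInComponent [Finite V] (lt : V → V → Prop) [IsTrans V lt]
    [Std.Irrefl lt] (hx : x ∉ Vs) : ∃ y, IsFirstInComponent T' Vs lt x y := by
  obtain ⟨y, hy, hmin⟩ := (Finite.wellFounded_of_trans_of_irrefl lt).has_min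
    {z | ReachableOutside T' Vs x z} ⟨x, .refl hx⟩
  exact ⟨y, hy, hmin⟩

theorem IsFirstInComponent.eq_or_lt [Std.Trichotomous lt] (hy : IsFirstInComponent T' Vs lt x y)
    {z : V} (hz : ReachableOutside T' Vs x z) : y = z ∨ lt y z := by
  rcases trichotomous_of lt y z with h | h | h
  · exact Or.inr h
  · exact Or.inl h
  · exact absurd h (hy.2 z hz)

namespace IsAttachment

/-- The earlier neighbour of the first vertex of a component cannot lie in the component. -/
theorem adj_lt_of_isFirstInComponent (hg : IsAttachment T' Vs g)
    (hearly : ∀ x ∉ Vs, ∃ d, lt d x ∧ T'.Adj d x) (hy : IsFirstInComponent T' Vs lt x y) :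
    T'.Adj (g x) y ∧ lt (g x) y := by
  obtain ⟨d, hdy, hd⟩ := hearly y hy.1.notMem_right
  rcases hg.eq_or_reachableOutside_of_adj hy.1 hd.symm with rfl | hxd
  · exact ⟨hd, hdy⟩
  · exact absurd hdy (hy.2 d hxd)

variable [Finite V] [Std.Trichotomous lt] [IsTrans V lt] [Std.Irrefl lt]

theorem apply_lt (hg : IsAttachment T' Vs g) (hearly : ∀ x ∉ Vs, ∃ d, lt d x ∧ T'.Adj d x)
    (hx : x ∉ Vs) : lt (g x) x := by
  obtain ⟨y, hy⟩ := exists_isFirstInComponent (T' := T') lt hx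
  have hgy := (hg.adj_lt_of_isFirstInComponent hearly hy).2
  rcases hy.eq_or_lt (.refl hx) with rfl | hyx
  · exact hgy
  · exact trans_of lt hgy hyx

/-- Each component of `T' − Vs` occupies an interval of the ordering. -/
theorem reachableOutside_of_lt_of_lt (hg : IsAttachment T' Vs g) (hPD : PropertyD T' lt)
    (hearly : ∀ x ∉ Vs, ∃ d, lt d x ∧ T'.Adj d x) (hy : IsFirstInComponent T' Vs lt x y)
    {v : V} (hv : ReachableOutside T' Vs x v) :
    ∀ w, lt y w → lt w v → ReachableOutside T' Vs x w := by
  have hgy := (hg.adj_lt_of_isFirstInComponent hearly hy).2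
  intro w
  induction w using (Finite.wellFounded_of_trans_of_irrefl lt).induction with | _ w ih => ?_
  intro hyw hwv
  by_contra hw
  have hwg : w ≠ g x := fun h => asymm_of lt hyw (h ▸ hgy)
  obtain ⟨p, hp⟩ := (hy.1.symm.trans hv).exists_walk
  obtain ⟨⟨⟨u, t⟩, hut⟩, hmem, hu, ht⟩ :=
    p.exists_boundary_dart {z | lt z w} hyw (asymm_of lt hwv)
  have hxu := hy.1.trans (hp u (p.dart_fst_mem_support_of_mem_darts hmem))
  have hxt := hy.1.trans (hp t (p.dart_snd_mem_support_of_mem_darts hmem))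
  have hwt : lt w t := by
    rcases trichotomous_of lt t w with h | rfl | h
    · exact absurd h ht
    · exact absurd hxt hw
    · exact h
  have hnuw : ¬ T'.Adj u w := fun h =>
    (hg.eq_or_reachableOutside_of_adj hxu h).elim hwg hw
  obtain ⟨d, hud, hdw, hd⟩ := hPD u w t hu hwt hut hnuw
  have hyd : lt y d := by
    rcases hy.eq_or_lt hxu with rfl | h
    · exact hud
    · exact trans_of lt h hud
  have hxd := ih d hdw hyd (trans_of lt hdw hwv)
  exact (hg.eq_or_reachableOutside_of_adj hxd hd).elim hwg hw

/-- If `a ≥ g b`, the four-point condition for `a`, the first vertex `y` of the component of `b`,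
and `c` yields an earlier neighbour of `y`, which can be neither `g b` nor in the component. -/
theorem lt_apply_of_adj (hg : IsAttachment T' Vs g) (hPD : PropertyD T' lt)
    (hearly : ∀ x ∉ Vs, ∃ d, lt d x ∧ T'.Adj d x) {a b c : V} (ha : a ∈ Vs) (hb : b ∉ Vs)
    (hab : lt a b) (hbc : lt b c) (hac : T'.Adj a c) (hne : a ≠ g b) : lt a (g b) := by
  obtain ⟨y, hy⟩ := exists_isFirstInComponent (T' := T') lt hb
  have hyc : lt y c := by
    rcases hy.eq_or_lt (.refl hb) with rfl | h
    · exact hbc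
    · exact trans_of lt h hbc
  have hay : lt a y := by
    rcases trichotomous_of lt a y with h | rfl | h
    · exact h
    · exact absurd ha hy.1.notMem_right
    · exact absurd ha
        (hg.reachableOutside_of_lt_of_lt hPD hearly hy (.refl hb) a h hab).notMem_right
  have hnay : ¬ T'.Adj a y := fun h =>
    (hg.eq_or_reachableOutside_of_adj hy.1 h.symm).elim hne fun h => h.notMem_right ha
  by_contra hlt
  obtain ⟨d, had, hdy, hd⟩ := hPD a y c hay hyc hac hnay
  rcases hg.eq_or_reachableOutside_of_adj hy.1 hd.symm with rfl | hbd
  · exact hlt had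
  · exact hy.2 d hbd hdy

theorem exists_of_mem_of_adj (hg : IsAttachment T' Vs g) (hPD : PropertyD T' lt)
    (hearly : ∀ x ∉ Vs, ∃ d, lt d x ∧ T'.Adj d x)
    (hin : ∀ a ∈ Vs, ∀ b ∈ Vs, T.Adj a b ↔ T'.Adj a b)
    (hout : ∀ x ∉ Vs, ∀ y, T.Adj x y ↔ y = g x) {a b c : V} (ha : a ∈ Vs)
    (hab : lt a b) (hbc : lt b c) (hac : T'.Adj a c) (hnab : ¬ T.Adj a b) :
    ∃ d, lt a d ∧ lt d b ∧ T.Adj d b := by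
  by_cases hb : b ∈ Vs
  · obtain ⟨d, had, hdb, hd⟩ := hPD a b c hab hbc hac fun h => hnab ((hin a ha b hb).2 h)
    refine ⟨d, had, hdb, ?_⟩
    by_cases hdVs : d ∈ Vs
    · exact (hin d hdVs b hb).2 hd
    · exact (hout d hdVs b).2 (hg.eq_of_adj hdVs hb hd)
  · have hne : a ≠ g b := fun h => hnab ((hout b hb a).2 h).symm
    exact ⟨g b, hg.lt_apply_of_adj hPD hearly ha hb hab hbc hac hne, hg.apply_lt hearly hb,
      ((hout b hb (g b)).2 rfl).symm⟩

theorem propertyD (hg : IsAttachment T' Vs g) (hPD : PropertyD T' lt)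
    (hearly : ∀ x ∉ Vs, ∃ d, lt d x ∧ T'.Adj d x)
    (hin : ∀ a ∈ Vs, ∀ b ∈ Vs, T.Adj a b ↔ T'.Adj a b)
    (hout : ∀ x ∉ Vs, ∀ y, T.Adj x y ↔ y = g x) : PropertyD T lt := by
  intro a b c hab hbc hac hnab
  by_cases ha : a ∈ Vs
  swap
  · rw [hout a ha c] at hac
    subst hac
    exact absurd (trans_of lt hab hbc) (asymm_of lt (hg.apply_lt hearly ha))
  by_cases hc : c ∈ Vs
  · exact hg.exists_of_mem_of_adj hPD hearly hin hout ha hab hbc ((hin a ha c hc).1 hac) hnab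
  -- `c` is a leaf hanging at `a`; replace it by the first vertex `y` of its component.
  have hac : a = g c := (hout c hc a).1 hac.symm
  obtain ⟨y, hy⟩ := exists_isFirstInComponent (T' := T') lt hc
  have hcb : ¬ ReachableOutside T' Vs c b := fun h =>
    hnab ((hout b h.notMem_right a).2 (hac.trans (hg.eq_of_reachableOutside h))).symm
  have hby : lt b y := by
    rcases trichotomous_of lt b y with h | rfl | h
    · exact h
    · exact absurd hy.1 hcb
    · exact absurd (hg.reachableOutside_of_lt_of_lt hPD hearly hy (.refl hc) b h hbc) hcb
  have hay : T'.Adj a y := hac ▸ (hg.adj_lt_of_isFirstInComponent hearly hy).1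
  exact hg.exists_of_mem_of_adj hPD hearly hin hout ha hab hby hay hnab

end IsAttachment

end Order

end

/-- Let `T'` be a DFS-tree support of a set `Pi` of orderings on a finite vertex
set `V` (each ordering is a strict linear order, and each satisfies Property D
w.r.t. `T'`).  Let `Vs ⊆ V` induce a subtree of `T'` containing the first vertex
of every ordering of `Pi`.  For every connected component `C` of `T' − Vs`, let
`v_C` be the (unique) vertex of `Vs` adjacent in `T'` to a vertex of `C`; this
is encoded by a function `g` that is constant on components of `T' − Vs`, maps
into `Vs`, and is adjacent in `T'` to some vertex of the component.  Let `T` be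
the graph consisting of the induced subtree `T'[Vs]` together with, for every
vertex `x ∉ Vs`, the edge `{g x, x}`.  Then `T` is a tree in which every vertex
outside `Vs` is a leaf (has exactly one neighbor), and every ordering of `Pi`
satisfies Property D with respect to `T`. -/
theorem stmt7 {V : Type*} [Fintype V]
    (T' : SimpleGraph V) (hT' : T'.IsTree)
    (Pi : Set (V → V → Prop))
    (hlin : ∀ lt ∈ Pi, IsTrichotomous V lt ∧ IsTrans V lt ∧ IsIrrefl V lt)
    (hPD : ∀ lt ∈ Pi, PropertyD T' lt)
    (Vs : Set V)
    (hVsTree : (T'.induce Vs).IsTree)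
    (hfirst : ∀ lt ∈ Pi, ∀ r : V, (∀ x : V, x ≠ r → lt r x) → r ∈ Vs)
    (g : V → V)
    (hg1 : ∀ x ∉ Vs, g x ∈ Vs)
    (hg2 : ∀ x, ∀ hx : x ∉ Vs, ∃ y, ∃ hy : y ∉ Vs,
      (T'.induce (Vsᶜ : Set V)).Reachable ⟨x, hx⟩ ⟨y, hy⟩ ∧ T'.Adj (g x) y)
    (hg3 : ∀ x, ∀ hx : x ∉ Vs, ∀ y, ∀ hy : y ∉ Vs,
      (T'.induce (Vsᶜ : Set V)).Reachable ⟨x, hx⟩ ⟨y, hy⟩ → g x = g y)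
    (T : SimpleGraph V)
    (hT : ∀ a b : V, T.Adj a b ↔
      ((a ∈ Vs ∧ b ∈ Vs ∧ T'.Adj a b) ∨ (a ∉ Vs ∧ b = g a) ∨ (b ∉ Vs ∧ a = g b))) :
    T.IsTree ∧ (∀ x ∉ Vs, ∃! y : V, T.Adj x y) ∧ ∀ lt ∈ Pi, PropertyD T lt := by
  have hg : IsAttachment T' Vs g :=
    .of_exists_adj hT'.isAcyclic hVsTree.connected hg1
      (fun x hx => let ⟨y, hy, hxy, hgy⟩ := hg2 x hx; ⟨y, ⟨hx, hy, hxy⟩, hgy⟩)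
      (fun ⟨hx, hy, hxy⟩ => hg3 _ hx _ hy hxy)
  have hin : ∀ a ∈ Vs, ∀ b ∈ Vs, T.Adj a b ↔ T'.Adj a b := by
    intro a ha b hb
    simp [hT, ha, hb]
  have hout : ∀ x ∉ Vs, ∀ y, T.Adj x y ↔ y = g x := by
    intro x hx y
    rw [hT]
    constructor
    · rintro (⟨h, -⟩ | ⟨-, h⟩ | ⟨hy, rfl⟩)
      exacts [absurd h hx, h, absurd (hg1 y hy) hx]
    · exact fun h => Or.inr (Or.inl ⟨hx, h⟩)
  refine ⟨⟨?_, ?_⟩, fun x hx => ⟨g x, (hout x hx _).2 rfl, fun y => (hout x hx y).1⟩,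
    fun lt hlt => ?_⟩
  · exact connected_of_induce_connected hVsTree.connected (fun a ha b hb => (hin a ha b hb).2)
      fun x hx => ⟨g x, hg1 x hx, (hout x hx _).2 rfl⟩
  · exact isAcyclic_of_subsingleton_neighborSet hT'.isAcyclic (fun a ha b hb => (hin a ha b hb).1)
      fun x hx y hy z hz => ((hout x hx y).1 hy).trans ((hout x hx z).1 hz).symm
  obtain ⟨_, _, _⟩ := hlin lt hlt
  have : Nonempty V := hT'.connected.nonempty
  obtain ⟨r, hr⟩ := exists_forall_ne_lt lt
  have hearly : ∀ x ∉ Vs, ∃ d, lt d x ∧ T'.Adj d x := fun x hx =>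
    (hPD lt hlt).exists_lt_adj hT'.connected.preconnected
      (hr x fun h => hx (h ▸ hfirst lt hlt r hr))
  exact hg.propertyD (hPD lt hlt) hearly hin hout
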